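/- arXiv:2209.10436 — 6 statements merged into one kernel-verified Lean document; each statement's English description precedes it below -/
import Mathlib

section
/- The polynomial identity -2·Δ_{xz}·Δ_{yz} + (z^2 + 2z - 1)·f(x,y,z) = (x y z^2 + x y z - i x z - i y z - z^2 + i x + i y - z)^2 holds in ℤ[i][x,y,z], where Δ_{xz} = x(1 - z^2) + i z(1 - x^2), Δ_{yz} = y(1 - z^2) + i z(1 - y^2), and f(x,y,z) = x^2 + y^2 + z^2 + x^2 y^2 z^2 - 4xyz. -/
/-- The identity `-2·Δ_{xz}·Δ_{yz} + (z²+2z-1)·f(x,y,z) = (xyz² + xyz - ixz - iyz - z² + ix + iy - z)²`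
where `Δ_{xz} = x(1-z²)+iz(1-x²)`, `Δ_{yz} = y(1-z²)+iz(1-y²)`, and
`f = x² + y² + z² + x²y²z² - 4xyz`, stated universally in any commutative ring
containing `i` with `i² = -1` (such as `ℤ[i][x,y,z]`). -/
theorem stmt_2 (R : Type*) [CommRing R] (i : R) (hi : i ^ 2 = -1) (x y z : R) :
    -2 * (x * (1 - z ^ 2) + i * z * (1 - x ^ 2)) * (y * (1 - z ^ 2) + i * z * (1 - y ^ 2)) +
      (z ^ 2 + 2 * z - 1) *
        (x ^ 2 + y ^ 2 + z ^ 2 + x ^ 2 * y ^ 2 * z ^ 2 - 4 * x * y * z) =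
      (x * y * z ^ 2 + x * y * z - i * x * z - i * y * z - z ^ 2 + i * x + i * y - z) ^ 2 := by
  linear_combination
    ((x ^ 2 + y ^ 2) * (z ^ 2 + 2 * z - 1) - 2 * x * y * (z - 1) ^ 2
      - 2 * z ^ 2 * (1 + x ^ 2 * y ^ 2)) * hi
end

section
/- The only real solutions (x,y,z) ∈ ℝ^3 of x^2 + y^2 + z^2 + x^2 y^2 z^2 = 4xyz are (0,0,0), (1,1,1), (1,-1,-1), (-1,1,-1), and (-1,-1,1). -/
/-!
For `y z ≥ 0` the equation is a sum of nonnegative terms,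
`(x (y z - 1))² + (y - z)² + 2 y z (x - 1)² = 0`, so each term vanishes; this forces
`y = z` and then either `x = y = z = 0` or `x = 1`, `y = z = ±1`. Since changing the signs of
two coordinates preserves the equation, the case `y z < 0` reduces to the first one by
`(x, y, z) ↦ (-x, y, -z)`.
-/

lemma w4_solution_of_nonneg_mul {x y z : ℝ}
    (h : x ^ 2 + y ^ 2 + z ^ 2 + x ^ 2 * y ^ 2 * z ^ 2 = 4 * x * y * z) (hyz : 0 ≤ y * z) :
    (x = 0 ∧ y = 0 ∧ z = 0) ∨ (x = 1 ∧ y = z ∧ (y = 1 ∨ y = -1)) := by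
  have hsum : (x * (y * z - 1)) ^ 2 + (y - z) ^ 2 + 2 * (y * z) * (x - 1) ^ 2 = 0 := by
    linear_combination h
  have h₁ := sq_nonneg (x * (y * z - 1))
  have h₂ := sq_nonneg (y - z)
  have h₃ : 0 ≤ 2 * (y * z) * (x - 1) ^ 2 := by positivity
  have hx : x * (y * z - 1) = 0 := pow_eq_zero_iff two_ne_zero |>.1 (by linarith)
  have hy_z : y = z := sub_eq_zero.1 <| pow_eq_zero_iff two_ne_zero |>.1 (by linarith)
  subst hy_z
  have hy_x : y * y * (x - 1) ^ 2 = 0 := by linarith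
  rcases eq_or_ne y 0 with rfl | hy
  · left
    simpa using hx
  · right
    have hx1 : x = 1 := by simpa [hy, sub_eq_zero] using hy_x
    subst hx1
    exact ⟨rfl, rfl, mul_self_eq_one_iff.1 (by linarith)⟩

/-- The only real solutions of `x² + y² + z² + x²y²z² = 4xyz` are
`(0,0,0)`, `(1,1,1)`, `(1,-1,-1)`, `(-1,1,-1)`, `(-1,-1,1)`. -/
theorem stmt_4 (x y z : ℝ) :
    x ^ 2 + y ^ 2 + z ^ 2 + x ^ 2 * y ^ 2 * z ^ 2 = 4 * x * y * z ↔
      (x, y, z) = (0, 0, 0) ∨ (x, y, z) = (1, 1, 1) ∨ (x, y, z) = (1, -1, -1) ∨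
        (x, y, z) = (-1, 1, -1) ∨ (x, y, z) = (-1, -1, 1) := by
  simp only [Prod.ext_iff]
  constructor
  · intro h
    rcases le_or_gt 0 (y * z) with hyz | hyz
    · rcases w4_solution_of_nonneg_mul h hyz with ⟨rfl, rfl, rfl⟩ | ⟨rfl, rfl, rfl | rfl⟩ <;>
        norm_num
    · have h' : (-x) ^ 2 + y ^ 2 + (-z) ^ 2 + (-x) ^ 2 * y ^ 2 * (-z) ^ 2 = 4 * -x * y * -z := by
        linear_combination h
      rcases w4_solution_of_nonneg_mul h' (by linarith) with ⟨-, rfl, -⟩ | ⟨hx, hz, rfl | rfl⟩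
      · simp at hyz
      · obtain ⟨rfl, rfl⟩ : x = -1 ∧ z = -1 := ⟨by linarith, by linarith⟩
        norm_num
      · obtain ⟨rfl, rfl⟩ : x = -1 ∧ z = 1 := ⟨by linarith, by linarith⟩
        norm_num
  · rintro (h | h | h | h | h) <;> obtain ⟨rfl, rfl, rfl⟩ := h <;> norm_num
end

section
/- Every affine real point of W_4 is a singular point of f(x,y,z) = x^2 + y^2 + z^2 + x^2 y^2 z^2 - 4xyz, i.e., if (x,y,z) ∈ ℝ^3 satisfies f(x,y,z) = 0 then all three partial derivatives of f vanish at (x,y,z). -/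
/-! The identity `2 (1 + z²) f = ((1+z)(x-y))² + (z(1+z)(1-xy))² + ((1-z)(x+y))² + (z(1-z)(1+xy))²`
shows that over an ordered field `f = 0` forces all four squared terms to vanish. This pins the
real zero set down to the origin and the four points `(±1, ±1, ±1)` with `xyz = 1`, and the
gradient of `f` vanishes at each of these five points. -/

def w4 {R : Type*} [CommRing R] (x y z : R) : R :=
  x ^ 2 + y ^ 2 + z ^ 2 + x ^ 2 * y ^ 2 * z ^ 2 - 4 * x * y * z

section
variable {R : Type*}

theorem eq_zero_of_sq_add_sq_add_sq_add_sq_eq_zero [CommRing R] [LinearOrder R]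
    [IsStrictOrderedRing R] {a b c d : R} (h : a ^ 2 + b ^ 2 + c ^ 2 + d ^ 2 = 0) :
    a = 0 ∧ b = 0 ∧ c = 0 ∧ d = 0 := by
  rw [add_eq_zero_iff_of_nonneg (by positivity) (sq_nonneg _),
    add_eq_zero_iff_of_nonneg (by positivity) (sq_nonneg _),
    add_eq_zero_iff_of_nonneg (sq_nonneg _) (sq_nonneg _)] at h
  simpa only [sq_eq_zero_iff, and_assoc] using h

theorem two_mul_one_add_sq_mul_w4 [CommRing R] (x y z : R) :
    2 * (1 + z ^ 2) * w4 x y z = ((1 + z) * (x - y)) ^ 2 + (z * (1 + z) * (1 - x * y)) ^ 2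
      + ((1 - z) * (x + y)) ^ 2 + (z * (1 - z) * (1 + x * y)) ^ 2 := by
  unfold w4; ring

variable [Field R] [LinearOrder R] [IsStrictOrderedRing R]

theorem w4_eq_zero_iff {x y z : R} : w4 x y z = 0 ↔
    (x = 0 ∧ y = 0 ∧ z = 0) ∨ (x = 1 ∧ y = 1 ∧ z = 1) ∨ (x = -1 ∧ y = -1 ∧ z = 1) ∨
      (x = 1 ∧ y = -1 ∧ z = -1) ∨ (x = -1 ∧ y = 1 ∧ z = -1) := by
  constructor
  · intro hf
    have hsos := two_mul_one_add_sq_mul_w4 x y z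
    rw [hf, mul_zero, eq_comm] at hsos
    obtain ⟨h₁, h₂, h₃, h₄⟩ := eq_zero_of_sq_add_sq_add_sq_add_sq_eq_zero hsos
    have hz : z = 0 ∨ z = 1 ∨ z = -1 := by
      have : z * (z - 1) * (z + 1) = 0 := by
        linear_combination -((1 - z) * h₂ + (1 + z) * h₄) / 2
      simpa only [mul_eq_zero, sub_eq_zero, add_eq_zero_iff_eq_neg, or_assoc] using this
    rcases hz with rfl | rfl | rfl
    · norm_num at h₁ h₃
      exact Or.inl ⟨by linear_combination (h₁ + h₃) / 2, by linear_combination (h₃ - h₁) / 2, rfl⟩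
    · norm_num at h₁ h₂
      obtain rfl : y = x := by linear_combination -h₁
      rcases sq_eq_one_iff.1 (by linear_combination -h₂ : y ^ 2 = 1) with rfl | rfl <;> norm_num
    · norm_num at h₃ h₄
      obtain rfl : y = -x := by linear_combination h₃
      rcases sq_eq_one_iff.1 (by linear_combination -h₄ : x ^ 2 = 1) with rfl | rfl <;> norm_num
  · rintro (⟨rfl, rfl, rfl⟩ | ⟨rfl, rfl, rfl⟩ | ⟨rfl, rfl, rfl⟩ | ⟨rfl, rfl, rfl⟩ | ⟨rfl, rfl, rfl⟩) <;>
      norm_num [w4]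

end

/-- Every affine real point of `W₄` is a singular point of
`f = x² + y² + z² + x²y²z² - 4xyz`: if `f(x,y,z) = 0` over `ℝ` then all three
partial derivatives of `f` vanish at `(x,y,z)`. -/
theorem stmt_5 (x y z : ℝ)
    (hf : x ^ 2 + y ^ 2 + z ^ 2 + x ^ 2 * y ^ 2 * z ^ 2 - 4 * x * y * z = 0) :
    2 * x + 2 * x * y ^ 2 * z ^ 2 - 4 * y * z = 0 ∧
      2 * y + 2 * x ^ 2 * y * z ^ 2 - 4 * x * z = 0 ∧
      2 * z + 2 * x ^ 2 * y ^ 2 * z - 4 * x * y = 0 := by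
  obtain ⟨rfl, rfl, rfl⟩ | ⟨rfl, rfl, rfl⟩ | ⟨rfl, rfl, rfl⟩ | ⟨rfl, rfl, rfl⟩ | ⟨rfl, rfl, rfl⟩ :=
    w4_eq_zero_iff.1 hf <;>
    norm_num
end

section
/- Let F be a field of characteristic ≠ 2 and let (x,y,z) ∈ F^3 satisfy f(x,y,z) = 0, where f = x^2 + y^2 + z^2 + x^2 y^2 z^2 - 4xyz. If the three discriminants Δ_x = 16y^2z^2 - 4(1+y^2z^2)(y^2+z^2), Δ_y = 16x^2z^2 - 4(1+x^2z^2)(x^2+z^2), Δ_z = 16x^2y^2 - 4(1+x^2y^2)(x^2+y^2) all vanish at (x,y,z), then (x,y,z) is one of (0,0,0), (1,1,1), (1,-1,-1), (-1,1,-1), (-1,-1,1). -/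
/-!
Viewed as a quadratic in `x`, `f = (1 + y²z²)x² - 4yz·x + (y² + z²)` has discriminant `Δ_x`, and
`Δ_x = (2(1 + y²z²)x - 4yz)²` whenever `f = 0`. So `Δ_x = 0` makes `x` a double root, giving
`(1 + y²z²)x = 2yz` and `y² + z² = 2xyz`. The analogous relations for `y` and `z` force
`x² = y² = z² = xyz`; either all coordinates vanish, or `yz = x`, `xy = z`, and then
`(1 + x²)x = 2x` gives `x² = y² = 1`.
-/

section DoubleRoot

variable {R : Type*} [CommRing R] [NoZeroDivisors R] {a b c t : R}

theorem two_mul_mul_add_eq_zero_of_discrim_eq_zero (hq : a * (t * t) + b * t + c = 0)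
    (hd : discrim a b c = 0) : 2 * a * t + b = 0 :=
  pow_eq_zero_iff two_ne_zero |>.mp ((discrim_eq_sq_of_quadratic_eq_zero hq).symm.trans hd)

theorem mul_add_two_mul_eq_zero_of_discrim_eq_zero (hq : a * (t * t) + b * t + c = 0)
    (hd : discrim a b c = 0) : b * t + 2 * c = 0 := by
  linear_combination 2 * hq - t * two_mul_mul_add_eq_zero_of_discrim_eq_zero hq hd

end DoubleRoot

section Surface

variable {R : Type*} [CommRing R] [NoZeroDivisors R]

theorem double_root_relations_of_discrim_eq_zero (h2 : (2 : R) ≠ 0) {x y z : R}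
    (hf : x ^ 2 + y ^ 2 + z ^ 2 + x ^ 2 * y ^ 2 * z ^ 2 - 4 * x * y * z = 0)
    (hd : 16 * y ^ 2 * z ^ 2 - 4 * (1 + y ^ 2 * z ^ 2) * (y ^ 2 + z ^ 2) = 0) :
    (1 + y ^ 2 * z ^ 2) * x = 2 * (y * z) ∧ y ^ 2 + z ^ 2 = 2 * (x * y * z) := by
  have hq : (1 + y ^ 2 * z ^ 2) * (x * x) + -4 * (y * z) * x + (y ^ 2 + z ^ 2) = 0 := by
    linear_combination hf
  have hdisc : discrim (1 + y ^ 2 * z ^ 2) (-4 * (y * z)) (y ^ 2 + z ^ 2) = 0 := by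
    rw [discrim]; linear_combination hd
  have hlin := two_mul_mul_add_eq_zero_of_discrim_eq_zero hq hdisc
  have hconst := mul_add_two_mul_eq_zero_of_discrim_eq_zero hq hdisc
  constructor
  · exact mul_left_cancel₀ h2 (by linear_combination hlin)
  · exact mul_left_cancel₀ h2 (by linear_combination hconst)

theorem eq_of_double_root_relations (h2 : (2 : R) ≠ 0) {x y z : R}
    (hx : (1 + y ^ 2 * z ^ 2) * x = 2 * (y * z)) (hsx : y ^ 2 + z ^ 2 = 2 * (x * y * z))
    (hsy : x ^ 2 + z ^ 2 = 2 * (x * y * z)) (hsz : x ^ 2 + y ^ 2 = 2 * (x * y * z)) :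
    (x, y, z) = (0, 0, 0) ∨ (x, y, z) = (1, 1, 1) ∨ (x, y, z) = (1, -1, -1) ∨
      (x, y, z) = (-1, 1, -1) ∨ (x, y, z) = (-1, -1, 1) := by
  have hyx : y ^ 2 = x ^ 2 := by linear_combination hsx - hsy
  have hzx : z ^ 2 = x ^ 2 := by linear_combination hsx - hsz
  have hxyz : x * x = x * (y * z) := mul_left_cancel₀ h2 (by linear_combination hsz - hyx)
  by_cases hx0 : x = 0
  · subst hx0
    have hy0 : y = 0 := pow_eq_zero_iff two_ne_zero |>.mp (by simpa using hyx)
    have hz0 : z = 0 := pow_eq_zero_iff two_ne_zero |>.mp (by simpa using hzx)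
    simp [hy0, hz0]
  have hyz : y * z = x := (mul_left_cancel₀ hx0 hxyz).symm
  have hx2 : x ^ 2 = 1 := by
    have h : x * (x ^ 2) = x * 1 := by linear_combination hx - (x * (y * z + x) - 2) * hyz
    exact mul_left_cancel₀ hx0 h
  have hz : z = x * y := by linear_combination y * hyz - z * (hyx.trans hx2)
  obtain rfl | rfl := sq_eq_one_iff.mp hx2 <;>
    obtain rfl | rfl := sq_eq_one_iff.mp (hyx.trans hx2) <;>
    subst hz <;> norm_num

end Surface

/-- If `(x,y,z)` lies on `f = x²+y²+z²+x²y²z²-4xyz = 0` over a field of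
characteristic `≠ 2` and the three discriminants `Δ_x, Δ_y, Δ_z` all vanish there,
then `(x,y,z)` is one of the five affine singular points. -/
theorem stmt_10 (F : Type*) [Field F] (h2 : (2 : F) ≠ 0) (x y z : F)
    (hf : x ^ 2 + y ^ 2 + z ^ 2 + x ^ 2 * y ^ 2 * z ^ 2 - 4 * x * y * z = 0)
    (hx : 16 * y ^ 2 * z ^ 2 - 4 * (1 + y ^ 2 * z ^ 2) * (y ^ 2 + z ^ 2) = 0)
    (hy : 16 * x ^ 2 * z ^ 2 - 4 * (1 + x ^ 2 * z ^ 2) * (x ^ 2 + z ^ 2) = 0)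
    (hz : 16 * x ^ 2 * y ^ 2 - 4 * (1 + x ^ 2 * y ^ 2) * (x ^ 2 + y ^ 2) = 0) :
    (x, y, z) = (0, 0, 0) ∨ (x, y, z) = (1, 1, 1) ∨ (x, y, z) = (1, -1, -1) ∨
      (x, y, z) = (-1, 1, -1) ∨ (x, y, z) = (-1, -1, 1) := by
  obtain ⟨hlx, hsx⟩ := double_root_relations_of_discrim_eq_zero h2 hf hx
  obtain ⟨-, hsy⟩ := double_root_relations_of_discrim_eq_zero h2 (x := y) (y := x) (z := z)
    (by linear_combination hf) hy
  obtain ⟨-, hsz⟩ := double_root_relations_of_discrim_eq_zero h2 (x := z) (y := x) (z := y)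
    (by linear_combination hf) hz
  exact eq_of_double_root_relations h2 hlx hsx (by linear_combination hsy)
    (by linear_combination hsz)
end

section
/- Let F be a field of characteristic ≠ 2 containing i with i^2 = -1, and suppose F contains a square root of 2 (equivalently, F contains a primitive 8th root of unity). Let (x,y,z) ∈ F^3 with f(x,y,z) = 0 and z^2 + 2z - 1 ≠ 0 relevantly; then Δ_{xz}(x,z) · Δ_{yz}(y,z) = -(1/2)·(x y z^2 + x y z - i x z - i y z - z^2 + i x + i y - z)^2, where Δ_{uz}(u,z) = u(1-z^2)+iz(1-u^2). In particular Δ_{xz}·Δ_{yz} is -1/2 times a square in F, hence (since -2 is a square in F) Δ_{xz} and Δ_{yz} differ multiplicatively by a square whenever both are nonzero. -/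
/-! With `Q` the polynomial squared on the right, `2 Δ_{xz} Δ_{yz} + Q²` is a polynomial
combination of `f` and `i² + 1`, so `Δ_{xz} Δ_{yz} = -(1/2) Q²` on the surface `f = 0`. Since
`t = s i` is a square root of `-2`, this equals `(t Q / 2)²`, and a nonzero product `a b = w²`
gives `a = (w / b)² b`. -/

/-- `Δ_{uz}(u, z)`. -/
def delta {R : Type*} [CommRing R] (i u z : R) : R :=
  u * (1 - z ^ 2) + i * z * (1 - u ^ 2)

theorem two_mul_delta_mul_delta {R : Type*} [CommRing R] {i x y z : R} (hi : i ^ 2 = -1)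
    (hf : x ^ 2 + y ^ 2 + z ^ 2 + x ^ 2 * y ^ 2 * z ^ 2 - 4 * x * y * z = 0) :
    2 * (delta i x z * delta i y z) =
      -(x * y * z ^ 2 + x * y * z - i * x * z - i * y * z - z ^ 2 + i * x + i * y - z) ^ 2 := by
  unfold delta
  linear_combination (-1 + 2 * z + z ^ 2) * hf +
    (2 * z ^ 2 + y ^ 2 - 2 * y ^ 2 * z - y ^ 2 * z ^ 2 + 2 * x * y - 4 * x * y * z
      + 2 * x * y * z ^ 2 + x ^ 2 - 2 * x ^ 2 * z - x ^ 2 * z ^ 2 + 2 * x ^ 2 * y ^ 2 * z ^ 2) * hi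

theorem neg_half_mul_sq_eq_sq {K : Type*} [Field K] (h2 : (2 : K) ≠ 0) {t : K}
    (ht : t ^ 2 = -2) (q : K) : -(1 / 2) * q ^ 2 = (t * q / 2) ^ 2 := by
  field_simp
  linear_combination -(q ^ 2) * ht

theorem exists_eq_sq_mul_of_mul_eq_sq {K : Type*} [Field K] {a b w : K} (ha : a ≠ 0)
    (hb : b ≠ 0) (h : a * b = w ^ 2) : ∃ u : K, u ≠ 0 ∧ a = u ^ 2 * b := by
  have hw : w ≠ 0 := by
    rintro rfl
    exact mul_ne_zero ha hb (by simpa using h)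
  refine ⟨w / b, div_ne_zero hw hb, ?_⟩
  field_simp
  linear_combination h

/-- Over a field of characteristic `≠ 2` containing `i` with `i² = -1` and a square
root `s` of `2`, if `f(x,y,z) = 0` then
`Δ_{xz}·Δ_{yz} = -(1/2)·(xyz² + xyz - ixz - iyz - z² + ix + iy - z)²`;
in particular `Δ_{xz}·Δ_{yz}` is `-1/2` times a square, and since `-2` is a square
in `F`, whenever `Δ_{xz}` and `Δ_{yz}` are both nonzero they differ multiplicatively
by a square. -/
theorem stmt_11 (F : Type*) [Field F] (h2 : (2 : F) ≠ 0) (i s : F)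
    (hi : i ^ 2 = -1) (hs : s ^ 2 = 2) (x y z : F)
    (hf : x ^ 2 + y ^ 2 + z ^ 2 + x ^ 2 * y ^ 2 * z ^ 2 - 4 * x * y * z = 0) :
    (x * (1 - z ^ 2) + i * z * (1 - x ^ 2)) * (y * (1 - z ^ 2) + i * z * (1 - y ^ 2)) =
      -(1 / 2) *
        (x * y * z ^ 2 + x * y * z - i * x * z - i * y * z - z ^ 2 + i * x + i * y - z) ^ 2 ∧
      (x * (1 - z ^ 2) + i * z * (1 - x ^ 2) ≠ 0 →
        y * (1 - z ^ 2) + i * z * (1 - y ^ 2) ≠ 0 →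
        ∃ u : F, u ≠ 0 ∧
          x * (1 - z ^ 2) + i * z * (1 - x ^ 2) =
            u ^ 2 * (y * (1 - z ^ 2) + i * z * (1 - y ^ 2))) := by
  have hprod : delta i x z * delta i y z = -(1 / 2) *
      (x * y * z ^ 2 + x * y * z - i * x * z - i * y * z - z ^ 2 + i * x + i * y - z) ^ 2 := by
    field_simp
    linear_combination two_mul_delta_mul_delta hi hf
  have hneg_two : (s * i) ^ 2 = -2 := by linear_combination i ^ 2 * hs + 2 * hi
  exact ⟨hprod, fun hx hy => exists_eq_sq_mul_of_mul_eq_sq hx hy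
    (hprod.trans (neg_half_mul_sq_eq_sq h2 hneg_two _))⟩
end

section
/- Let F be a field of characteristic ≠ 2 containing a primitive 8th root of unity, and let (x,y,z) ∈ F^3 be a nonsingular point of W_4 (f(x,y,z) = 0 but (x,y,z) not among the five singular affine points). Then at least one of the six quantities Δ_{uv} (u ≠ v ∈ {x,y,z}), where Δ_{uv} = u(1-v^2)+iv(1-u^2), is nonzero, and all nonzero ones lie in the same square class of F^×: any two nonzero Δ_{uv}, Δ_{u'v'} satisfy Δ_{uv}·Δ_{u'v'} ∈ (F^×)^2. -/
/-!
Modulo the equation of `W₄` and `i² = -1`, every product of two `Δ`'s is a square up to a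
factor `2` or `±i`: with `(u, v, w)` a permutation of `(x, y, z)`,
`Δ_uv Δ_vu = -i T²`, `2 Δ_uv Δ_vw = i V²`, `2 Δ_uv Δ_uw = U²` and `2 Δ_uv Δ_wv = U'²`.
Since `2` is a square, so are `±i` (`2 i = (1 + i)²`), hence all these products are squares.
If all six `Δ` vanished, combining `Δ_uv = 0` with `Δ_vu = 0` would give `u (1 - v²) = 0` for
all `u ≠ v`, which on `W₄` forces one of the five singular points.
-/

theorem IsSquare.of_two_mul {F : Type*} [Field F] {a : F} (h2 : (2 : F) ≠ 0)
    (hsq2 : IsSquare (2 : F)) (h : IsSquare (2 * a)) : IsSquare a := by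
  simpa [h2] using h.div hsq2

theorem isSquare_of_sq_eq_neg_one {F : Type*} [Field F] {i : F} (h2 : (2 : F) ≠ 0)
    (hsq2 : IsSquare (2 : F)) (hi : i ^ 2 = -1) : IsSquare i :=
  .of_two_mul h2 hsq2 ⟨1 + i, by linear_combination -hi⟩

namespace W4

variable {F : Type*} [Field F]

def eqn (x y z : F) : F := x ^ 2 + y ^ 2 + z ^ 2 + x ^ 2 * y ^ 2 * z ^ 2 - 4 * x * y * z

def singularPoints : Set (F × F × F) :=
  {(0, 0, 0), (1, 1, 1), (1, -1, -1), (-1, 1, -1), (-1, -1, 1)}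

def delta (i u v : F) : F := u * (1 - v ^ 2) + i * v * (1 - u ^ 2)

def deltas (i x y z : F) : List F :=
  [delta i x y, delta i x z, delta i y x, delta i y z, delta i z x, delta i z y]

variable {i u v w : F}

theorem mul_one_sub_sq_eq_zero (h2 : (2 : F) ≠ 0) (hi : i ^ 2 = -1)
    (huv : delta i u v = 0) (hvu : delta i v u = 0) : u * (1 - v ^ 2) = 0 := by
  unfold delta at huv hvu
  have : 2 * (u * (1 - v ^ 2)) = 0 := by
    linear_combination huv - i * hvu + u * (1 - v ^ 2) * hi
  simpa [h2] using this

theorem mem_singularPoints_of_sq_eq_one {x y z : F} (hx : x ^ 2 = 1) (hy : y ^ 2 = 1)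
    (hxyz : x * y * z = 1) : (x, y, z) ∈ singularPoints := by
  have hz : z = x * y := by linear_combination x * y * hxyz - z * y ^ 2 * hx - z * hy
  rcases sq_eq_one_iff.mp hx with rfl | rfl <;> rcases sq_eq_one_iff.mp hy with rfl | rfl <;>
    simp [singularPoints, hz]

theorem mem_singularPoints_of_mul_one_sub_sq_eq_zero {x y z : F} (h2 : (2 : F) ≠ 0)
    (hf : eqn x y z = 0) (hxy : x * (1 - y ^ 2) = 0) (hxz : x * (1 - z ^ 2) = 0)
    (hyx : y * (1 - x ^ 2) = 0) (hzy : z * (1 - y ^ 2) = 0) : (x, y, z) ∈ singularPoints := by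
  by_cases hx0 : x = 0
  · have hy0 : y = 0 := by simpa [hx0] using hyx
    have hz0 : z = 0 := by simpa [hy0] using hzy
    simp [singularPoints, hx0, hy0, hz0]
  have hy : y ^ 2 = 1 := by linear_combination -(mul_eq_zero.mp hxy).resolve_left hx0
  have hz : z ^ 2 = 1 := by linear_combination -(mul_eq_zero.mp hxz).resolve_left hx0
  have hy0 : y ≠ 0 := by rintro rfl; simp at hy
  have hx : x ^ 2 = 1 := by linear_combination -(mul_eq_zero.mp hyx).resolve_left hy0
  have h4 : (2 : F) * 2 * (x * y * z - 1) = 0 := by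
    unfold eqn at hf
    linear_combination -hf + (1 + y ^ 2 * z ^ 2) * hx + (1 + z ^ 2) * hy + 2 * hz
  exact mem_singularPoints_of_sq_eq_one hx hy (by simpa [h2, sub_eq_zero] using h4)

theorem exists_delta_ne_zero {x y z : F} (h2 : (2 : F) ≠ 0) (hi : i ^ 2 = -1)
    (hf : eqn x y z = 0) (hns : (x, y, z) ∉ singularPoints) :
    ∃ d ∈ deltas i x y z, d ≠ 0 := by
  by_contra! h
  simp only [deltas, List.mem_cons, List.not_mem_nil, or_false, forall_eq_or_imp,
    forall_eq] at h
  obtain ⟨hxy, hxz, hyx, hyz, hzx, hzy⟩ := h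
  exact hns <| mem_singularPoints_of_mul_one_sub_sq_eq_zero h2 hf
    (mul_one_sub_sq_eq_zero h2 hi hxy hyx) (mul_one_sub_sq_eq_zero h2 hi hxz hzx)
    (mul_one_sub_sq_eq_zero h2 hi hyx hxy) (mul_one_sub_sq_eq_zero h2 hi hzy hyz)

theorem delta_mul_delta_swap (hi : i ^ 2 = -1) (hf : eqn u v w = 0) :
    delta i u v * delta i v u = -i * (w * (1 + u ^ 2 * v ^ 2) - 2 * u * v) ^ 2 := by
  unfold delta eqn at *
  linear_combination (i * u ^ 2 * v ^ 2 + i) * hf + u * v * (1 - u ^ 2) * (1 - v ^ 2) * hi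

theorem two_mul_delta_mul_delta_chain (hi : i ^ 2 = -1) (hf : eqn u v w = 0) :
    2 * (delta i u v * delta i v w) =
      i * (v * (1 - v) * (1 + u * w) - i * (u - w) * (1 + v)) ^ 2 := by
  unfold delta eqn at *
  linear_combination (-i * v ^ 2 + 2 * i * v + i) * hf +
    (2 * u * v * (1 - v ^ 2) * (1 - w ^ 2) - i * ((u - w) * (1 + v)) ^ 2) * hi

theorem two_mul_delta_mul_delta_left (hi : i ^ 2 = -1) (hf : eqn u v w = 0) :
    2 * (delta i u v * delta i u w) =
      (u * (u + 1) * (v * w - 1) + i * (u - 1) * (v + w)) ^ 2 := by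
  unfold delta eqn at *
  linear_combination -(u ^ 2 + 2 * u - 1) * hf +
    (u - 1) ^ 2 * (2 * u * v * w * (u + 2) - v ^ 2 - w ^ 2) * hi

theorem two_mul_delta_mul_delta_right (hi : i ^ 2 = -1) (hf : eqn u v w = 0) :
    2 * (delta i u v * delta i w v) =
      ((u + w) * (v - 1) + i * v * (v + 1) * (u * w - 1)) ^ 2 := by
  unfold delta eqn at *
  linear_combination (v ^ 2 + 2 * v - 1) * hf +
    (-u ^ 2 * v ^ 4 * w ^ 2 - 2 * u ^ 2 * v ^ 3 * w ^ 2 + u ^ 2 * v ^ 2 * w ^ 2 + 2 * u * v ^ 4 * w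
      + 4 * u * v ^ 3 * w - 2 * u ^ 2 * v ^ 2 + 2 * u * v ^ 2 * w - v ^ 4 - 2 * v ^ 2 * w ^ 2
      - 2 * v ^ 3 + v ^ 2) * hi

section IsSquare

variable (h2 : (2 : F) ≠ 0) (hsq2 : IsSquare (2 : F)) (hi : i ^ 2 = -1)
include h2 hsq2 hi

theorem isSquare_delta_mul_delta_swap (hf : eqn u v w = 0) :
    IsSquare (delta i u v * delta i v u) := by
  have hi' : (-i) ^ 2 = -1 := by rw [neg_sq, hi]
  rw [delta_mul_delta_swap hi hf]
  exact (isSquare_of_sq_eq_neg_one h2 hsq2 hi').mul (.sq _)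

theorem isSquare_delta_mul_delta_chain (hf : eqn u v w = 0) :
    IsSquare (delta i u v * delta i v w) :=
  .of_two_mul h2 hsq2 <| two_mul_delta_mul_delta_chain hi hf ▸
    (isSquare_of_sq_eq_neg_one h2 hsq2 hi).mul (.sq _)

theorem isSquare_delta_mul_delta_left (hf : eqn u v w = 0) :
    IsSquare (delta i u v * delta i u w) :=
  .of_two_mul h2 hsq2 <| two_mul_delta_mul_delta_left hi hf ▸ .sq _

theorem isSquare_delta_mul_delta_right (hf : eqn u v w = 0) :
    IsSquare (delta i u v * delta i w v) :=
  .of_two_mul h2 hsq2 <| two_mul_delta_mul_delta_right hi hf ▸ .sq _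

theorem isSquare_mul_of_mem_deltas {x y z a b : F} (hf : eqn x y z = 0)
    (ha : a ∈ deltas i x y z) (hb : b ∈ deltas i x y z) : IsSquare (a * b) := by
  obtain ⟨hxzy, hyxz, hyzx, hzxy, hzyx⟩ : eqn x z y = 0 ∧ eqn y x z = 0 ∧ eqn y z x = 0 ∧
      eqn z x y = 0 ∧ eqn z y x = 0 := by
    unfold eqn at hf ⊢
    refine ⟨?_, ?_, ?_, ?_, ?_⟩ <;> linear_combination hf
  simp only [deltas, List.mem_cons, List.not_mem_nil, or_false] at ha hb
  rcases ha with rfl | rfl | rfl | rfl | rfl | rfl <;>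
    rcases hb with rfl | rfl | rfl | rfl | rfl | rfl <;>
    first
    | exact .mul_self _
    | exact isSquare_delta_mul_delta_swap h2 hsq2 hi ‹_›
    | exact isSquare_delta_mul_delta_left h2 hsq2 hi ‹_›
    | exact isSquare_delta_mul_delta_right h2 hsq2 hi ‹_›
    | exact isSquare_delta_mul_delta_chain h2 hsq2 hi ‹_›
    | (rw [mul_comm]; exact isSquare_delta_mul_delta_chain h2 hsq2 hi ‹_›)

end IsSquare

end W4

/-- Let `F` be a field of characteristic `≠ 2` containing a primitive 8th root of
unity (equivalently, elements `i, s` with `i² = -1`, `s² = 2`), and let `(x,y,z)` be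
a nonsingular affine point of `W₄`. Then at least one of the six quantities
`Δ_{uv} = u(1-v²)+iv(1-u²)` (`u ≠ v ∈ {x,y,z}`) is nonzero, and any two nonzero ones
lie in the same square class: their product is a nonzero square of `F`. -/
theorem stmt_17 (F : Type*) [Field F] (h2 : (2 : F) ≠ 0) (i s : F)
    (hi : i ^ 2 = -1) (hs : s ^ 2 = 2) (x y z : F)
    (hf : x ^ 2 + y ^ 2 + z ^ 2 + x ^ 2 * y ^ 2 * z ^ 2 - 4 * x * y * z = 0)
    (hns : (x, y, z) ∉ ({(0, 0, 0), (1, 1, 1), (1, -1, -1), (-1, 1, -1), (-1, -1, 1)} :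
      Set (F × F × F))) :
    (∃ d ∈ [x * (1 - y ^ 2) + i * y * (1 - x ^ 2), x * (1 - z ^ 2) + i * z * (1 - x ^ 2),
        y * (1 - x ^ 2) + i * x * (1 - y ^ 2), y * (1 - z ^ 2) + i * z * (1 - y ^ 2),
        z * (1 - x ^ 2) + i * x * (1 - z ^ 2), z * (1 - y ^ 2) + i * y * (1 - z ^ 2)],
      d ≠ 0) ∧
    ∀ a ∈ [x * (1 - y ^ 2) + i * y * (1 - x ^ 2), x * (1 - z ^ 2) + i * z * (1 - x ^ 2),
        y * (1 - x ^ 2) + i * x * (1 - y ^ 2), y * (1 - z ^ 2) + i * z * (1 - y ^ 2),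
        z * (1 - x ^ 2) + i * x * (1 - z ^ 2), z * (1 - y ^ 2) + i * y * (1 - z ^ 2)],
      ∀ b ∈ [x * (1 - y ^ 2) + i * y * (1 - x ^ 2), x * (1 - z ^ 2) + i * z * (1 - x ^ 2),
        y * (1 - x ^ 2) + i * x * (1 - y ^ 2), y * (1 - z ^ 2) + i * z * (1 - y ^ 2),
        z * (1 - x ^ 2) + i * x * (1 - z ^ 2), z * (1 - y ^ 2) + i * y * (1 - z ^ 2)],
      a ≠ 0 → b ≠ 0 → ∃ u : F, u ≠ 0 ∧ a * b = u ^ 2 := by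
  have hsq2 : IsSquare (2 : F) := ⟨s, by rw [← hs, sq]⟩
  refine ⟨W4.exists_delta_ne_zero h2 hi hf hns, fun a ha b hb ha0 hb0 => ?_⟩
  obtain ⟨u, hu⟩ := W4.isSquare_mul_of_mem_deltas h2 hsq2 hi hf ha hb
  refine ⟨u, fun hu0 => mul_ne_zero ha0 hb0 ?_, by rw [hu, sq]⟩
  rw [hu, hu0, mul_zero]
end
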